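/- Let λ ≤ π be permutations with adjacency decomposition π̂ = (π̂_1,…,π̂_t), and let S be a nonempty set of rightmost embeddings of λ in π. Define ∨S = (max_{η∈S} η̂_1, …, max_{η∈S} η̂_t), the componentwise maximum (well defined since each {η̂_i : η∈S} is a chain). Then ∨S = π̂ if and only if ⋂_{η∈S} Z(η) = ∅. -/
import Mathlib


open scoped Classical

set_option maxHeartbeats 1000000

/-! ## The permutation pattern poset -/

/-- The type of all (finite) permutations: a permutation of length `n` is an element of
`Equiv.Perm (Fin n)`; the letter in position `i` is `p.2 i` (letters compared via the
order on `Fin n`). -/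
abbrev PermPat : Type := Σ n : ℕ, Equiv.Perm (Fin n)

/-- Pattern containment: `PatLe σ π` iff `π` has a subsequence in the same relative order
as `σ`, i.e. there is an occurrence of `σ` in `π`. -/
def PatLe (p q : PermPat) : Prop :=
  ∃ f : Fin p.1 ↪o Fin q.1, ∀ i j : Fin p.1, p.2 i < p.2 j ↔ q.2 (f i) < q.2 (f j)

lemma patLe_refl (p : PermPat) : PatLe p p := by
  refine ⟨(OrderIso.refl (Fin p.1)).toOrderEmbedding, fun i j => ?_⟩
  simp

lemma patLe_trans {p q r : PermPat} (h1 : PatLe p q) (h2 : PatLe q r) : PatLe p r := by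
  obtain ⟨f, hf⟩ := h1
  obtain ⟨g, hg⟩ := h2
  exact ⟨f.trans g, fun i j => (hf i j).trans (hg (f i) (f j))⟩

lemma PatLe.len_le {p q : PermPat} (h : PatLe p q) : p.1 ≤ q.1 := by
  obtain ⟨f, -⟩ := h
  simpa using Fintype.card_le_of_embedding f.toEmbedding

lemma StrictMono.fin_apply_eq {n : ℕ} {f : Fin n → Fin n} (hf : StrictMono f) (i : Fin n) :
    f i = i := by
  have hle : ∀ m : ℕ, ∀ j : Fin n, j.val = m → j.val ≤ (f j).val := by
    intro m
    induction m with
    | zero => intro j hj; omega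
    | succ m ih =>
      intro j hj
      have hm : m < n := by omega
      have h1 : f ⟨m, hm⟩ < f j := hf (by simp [Fin.lt_def]; omega)
      have h2 := ih ⟨m, hm⟩ rfl
      simp only [Fin.lt_def] at h1
      simp only [Fin.val_mk] at h1 h2
      omega
  have hge : ∀ m : ℕ, ∀ j : Fin n, j.val + m + 1 = n → (f j).val ≤ j.val := by
    intro m
    induction m with
    | zero => intro j hj; have := (f j).isLt; omega
    | succ m ih =>
      intro j hj
      have hs : j.val + 1 < n := by omega
      have h1 : f j < f ⟨j.val + 1, hs⟩ := hf (by simp [Fin.lt_def])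
      have h2 := ih ⟨j.val + 1, hs⟩ (by simp only [Fin.val_mk]; omega)
      simp only [Fin.lt_def] at h1
      simp only [Fin.val_mk] at h1 h2
      omega
  exact Fin.ext (le_antisymm (hge (n - 1 - i.val) i (by have := i.isLt; omega)) (hle i.val i rfl))

lemma patLe_antisymm {p q : PermPat} (hpq : PatLe p q) (hqp : PatLe q p) : p = q := by
  obtain ⟨k, σ⟩ := p
  obtain ⟨n, π⟩ := q
  have hkn : k = n := le_antisymm hpq.len_le hqp.len_le
  subst hkn
  obtain ⟨f, hf⟩ := hpq
  have hfid : ∀ i, f i = i := fun i => f.strictMono.fin_apply_eq i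
  have key : ∀ i j : Fin k, σ i < σ j ↔ π i < π j := by
    intro i j
    simpa [hfid] using hf i j
  have hmono : StrictMono (fun a => π (σ.symm a)) := by
    intro a b hab
    have : σ (σ.symm a) < σ (σ.symm b) := by simpa using hab
    exact (key _ _).mp this
  have hid : ∀ a, π (σ.symm a) = a := fun a => hmono.fin_apply_eq a
  have hσπ : σ = π := by
    apply Equiv.ext
    intro x
    have := hid (σ x)
    simpa using this.symm
  rw [hσπ]

/-- The permutation pattern poset `𝒫`. -/
instance : PartialOrder PermPat where
  le := PatLe
  le_refl := patLe_refl
  le_trans _ _ _ := patLe_trans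
  le_antisymm _ _ := patLe_antisymm

lemma PermPat.le_def {p q : PermPat} : p ≤ q ↔ PatLe p q := Iff.rfl

/-! ## The Möbius function of the pattern poset

`permMu` is the Möbius function of the pattern poset: `μ(σ,σ) = 1`,
`μ(σ,π) = -∑_{σ ≤ z < π} μ(σ,z)` for `σ < π`, and `μ(σ,π) = 0` if `σ ≰ π`.
(Every `z < π` is of length strictly smaller than `π`, so the inner sum ranges over
the permutations of each length `m < |π|`.) -/
noncomputable def permMu (p q : PermPat) : ℤ :=
  if p = q then 1
  else if PatLe p q then
    - ∑ m : Fin q.1, ∑ z : Equiv.Perm (Fin m.1),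
        if PatLe p ⟨m.1, z⟩ ∧ PatLe ⟨m.1, z⟩ q then permMu p ⟨m.1, z⟩ else 0
  else 0
termination_by q.1
decreasing_by exact m.isLt

/-! ## The Möbius function of a finite poset -/

/-- The Möbius function `μ(a,b)` of a finite poset. -/
noncomputable def muPair {X : Type*} [PartialOrder X] [Fintype X] (a b : X) : ℤ :=
  if a = b then 1
  else if a ≤ b then
    - ∑ z ∈ (Finset.univ.filter fun z : X => a ≤ z ∧ z < b).attach, muPair a z.1
  else 0
termination_by Set.ncard {z : X | z < b}
decreasing_by
  rename_i z
  have hz : z.1 < b := ((Finset.mem_filter.mp z.2).2).2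
  exact Set.ncard_lt_ncard
    ((Set.ssubset_iff_of_subset (fun w hw => lt_trans hw hz)).mpr ⟨z.1, hz, fun hmem => absurd hmem (by exact lt_irrefl _)⟩)
    (Set.toFinite _)

instance instFiniteOption' {α : Type*} [Finite α] : Finite (Option α) :=
  Finite.of_equiv (α ⊕ PUnit.{1}) (Equiv.optionEquivSumPUnit.{0} α).symm
instance {α : Type*} [Finite α] : Finite (WithTop α) := inferInstanceAs (Finite (Option α))
instance {α : Type*} [Finite α] : Finite (WithBot α) := inferInstanceAs (Finite (Option α))
instance {α : Type*} [Fintype α] : Fintype (WithTop α) := inferInstanceAs (Fintype (Option α))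
instance {α : Type*} [Fintype α] : Fintype (WithBot α) := inferInstanceAs (Fintype (Option α))

/-- For a finite poset `X`, `muHat X` is `μ(0̂,1̂)` computed in the poset obtained from `X`
by adjoining a new bottom element `0̂` and a new top element `1̂`.  (For infinite `X` the
junk value `0` is returned.) -/
noncomputable def muHat (X : Type*) [PartialOrder X] : ℤ :=
  if h : Finite X then
    letI := h
    letI : Fintype (WithBot (WithTop X)) := Fintype.ofFinite _
    muPair (⊥ : WithBot (WithTop X)) ⊤
  else 0

/-! ## Adjacencies, embeddings, normality -/

/-- The position one step before `j` (or `j` itself when `j = 0`). -/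
def prevPos {n : ℕ} (j : Fin n) : Fin n := ⟨j.val - 1, lt_of_le_of_lt (Nat.sub_le _ _) j.isLt⟩

/-- `Linked π j` says position `j` is linked to the preceding position, i.e. the letters in
positions `j-1, j` have consecutive values.  These are exactly the positions lying in the
tail of some adjacency of `π` (an adjacency is a maximal factor of consecutively valued
increasing or decreasing letters; its tail is all but its first letter). -/
def Linked {n : ℕ} (π : Equiv.Perm (Fin n)) (j : Fin n) : Prop :=
  0 < j.val ∧ ((π j).val + 1 = (π (prevPos j)).val ∨ (π (prevPos j)).val + 1 = (π j).val)

/-- The number of adjacencies (maximal linked runs) of `π`. -/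
noncomputable def numBlocks {n : ℕ} (π : Equiv.Perm (Fin n)) : ℕ :=
  (Finset.univ.filter fun j : Fin n => ¬ Linked π j).card

/-- The index (starting from 0) of the adjacency of `π` containing position `j`. -/
noncomputable def blockIdx {n : ℕ} (π : Equiv.Perm (Fin n)) (j : Fin n) : ℕ :=
  (Finset.univ.filter fun m : Fin n => ¬ Linked π m ∧ m ≤ j).card - 1

/-- The set of positions in the `i`-th adjacency of `π`. -/
noncomputable def blockF {n : ℕ} (π : Equiv.Perm (Fin n)) (i : ℕ) : Finset (Fin n) :=
  Finset.univ.filter fun j => blockIdx π j = i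

/-- The standardization of an injective tuple `v` of values in `Fin n`: the permutation of
`Fin m` whose letters are in the same relative order as `v`. -/
noncomputable def stdize {m n : ℕ} (v : Fin m → Fin n) (hv : Function.Injective v) :
    Equiv.Perm (Fin m) :=
  (Equiv.ofInjective v hv).trans
    (monoEquivOfFin (Set.range v)
      (by rw [Set.card_range_of_injective hv, Fintype.card_fin])).symm.toEquiv

/-- The pattern (as an abstract permutation) formed by the letters of `π` in the set `E`
of positions. -/
noncomputable def patternOf {n : ℕ} (π : Equiv.Perm (Fin n)) (E : Finset (Fin n)) : PermPat :=
  ⟨E.card, stdize (fun i => π ((E.orderIsoOfFin rfl) i))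
    (by
      intro i j hij
      exact (E.orderIsoOfFin rfl).injective (Subtype.coe_injective (π.injective hij)))⟩

/-- `E` is (the set of positions of the nonzero entries of) an embedding of `p` in `π`:
the letters of `π` in positions `E` form an occurrence of `p`. -/
def IsEmb (p : PermPat) {n : ℕ} (π : Equiv.Perm (Fin n)) (E : Finset (Fin n)) : Prop :=
  patternOf π E = p

/-- An embedding (given by its set `E` of nonzero positions) is normal if every position in
the tail of an adjacency of `π` is nonzero. -/
def IsNormal {n : ℕ} (π : Equiv.Perm (Fin n)) (E : Finset (Fin n)) : Prop :=
  ∀ j, Linked π j → j ∈ E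

/-- `NE p π`: the number of normal embeddings of `p` in `π`. -/
noncomputable def NE (p : PermPat) {n : ℕ} (π : Equiv.Perm (Fin n)) : ℕ :=
  Set.ncard {E : Finset (Fin n) | IsEmb p π E ∧ IsNormal π E}

/-- An embedding is rightmost if, within each adjacency of `π`, all of its zero entries
precede all of its nonzero entries. -/
def IsRightmost {n : ℕ} (π : Equiv.Perm (Fin n)) (E : Finset (Fin n)) : Prop :=
  ∀ i j : Fin n, blockIdx π i = blockIdx π j → i ≤ j → i ∈ E → j ∈ E

/-- Membership in `Ê^{p,π}`, the set of rightmost embeddings of `p` in `π`. -/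
def EhatMem (p : PermPat) {n : ℕ} (π : Equiv.Perm (Fin n)) (E : Finset (Fin n)) : Prop :=
  IsEmb p π E ∧ IsRightmost π E

/-- Membership in `EZ^{p,π}`: `S` is a nonempty set of rightmost embeddings of `p` in `π`
whose zero sets have empty intersection (every position is nonzero in some member). -/
def EZmem (p : PermPat) {n : ℕ} (π : Equiv.Perm (Fin n)) (S : Finset (Finset (Fin n))) : Prop :=
  S.Nonempty ∧ (∀ E ∈ S, EhatMem p π E) ∧ ∀ j : Fin n, ∃ E ∈ S, j ∈ E

/-- The sum `∑_{S ∈ EZ^{p,π}} (-1)^{|S|}`. -/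
noncomputable def EZsum (p : PermPat) {n : ℕ} (π : Equiv.Perm (Fin n)) : ℤ :=
  ∑ S ∈ Finset.univ.filter (fun S : Finset (Finset (Fin n)) => EZmem p π S), (-1 : ℤ) ^ S.card

/-! ## The adjacency decomposition and the posets `P(η)`, `A^{σ,π}` -/

/-- `π̂`, the adjacency decomposition of `π`, as a tuple of permutations. -/
noncomputable def Phat {n : ℕ} (π : Equiv.Perm (Fin n)) : Fin (numBlocks π) → PermPat :=
  fun i => patternOf π (blockF π i.val)

/-- `η̂`, the decomposition of an embedding (with nonzero positions `E`) along the
adjacencies of `π`. -/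
noncomputable def etaHat {n : ℕ} (π : Equiv.Perm (Fin n)) (E : Finset (Fin n)) :
    Fin (numBlocks π) → PermPat :=
  fun i => patternOf π (E.filter fun j => blockIdx π j = i.val)

/-- The product poset `P(η) = [η̂_1,π̂_1] × ⋯ × [η̂_t,π̂_t]`, as a subset of the product of
copies of the pattern poset indexed by the adjacencies of `π`. -/
noncomputable def Pemb {n : ℕ} (π : Equiv.Perm (Fin n)) (E : Finset (Fin n)) :
    Set (Fin (numBlocks π) → PermPat) :=
  Set.Icc (etaHat π E) (Phat π)

/-- `P(η)°`: the product poset `P(η)` with its bottom element `η̂` and top element `π̂`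
removed. -/
noncomputable def PembO {n : ℕ} (π : Equiv.Perm (Fin n)) (E : Finset (Fin n)) :
    Set (Fin (numBlocks π) → PermPat) :=
  Pemb π E \ {etaHat π E, Phat π}

/-- `A^{p,π} = ⋃_{η ∈ Ê^{p,π}} P(η)°`. -/
noncomputable def Aspace (p : PermPat) {n : ℕ} (π : Equiv.Perm (Fin n)) :
    Set (Fin (numBlocks π) → PermPat) :=
  ⋃ E ∈ {E : Finset (Fin n) | EhatMem p π E}, PembO π E

/-! ## Sundry notions -/

/-- The number of descents of a permutation. -/
noncomputable def desNum {n : ℕ} (π : Equiv.Perm (Fin n)) : ℕ :=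
  (Finset.univ.filter fun j : Fin n => ∃ h : j.val + 1 < n, π ⟨j.val + 1, h⟩ < π j).card

/-- The direct sum of two permutations. -/
def dsum {a b : ℕ} (σ : Equiv.Perm (Fin a)) (τ : Equiv.Perm (Fin b)) :
    Equiv.Perm (Fin (a + b)) :=
  finSumFinEquiv.symm.trans ((Equiv.sumCongr σ τ).trans finSumFinEquiv)

/-- A permutation is indecomposable if it is nonempty and not the direct sum of two
nonempty permutations. -/
def Indecomp (p : PermPat) : Prop :=
  0 < p.1 ∧ ¬ ∃ (a b : ℕ) (σ : Equiv.Perm (Fin a)) (τ : Equiv.Perm (Fin b)),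
    0 < a ∧ 0 < b ∧ p = ⟨a + b, dsum σ τ⟩

/-- `dpow lam m = lam ⊕ ⋯ ⊕ lam` (`m` summands). -/
def dpow {l : ℕ} (lam : Equiv.Perm (Fin l)) : (m : ℕ) → Equiv.Perm (Fin (m * l))
  | 0 => (finCongr (Nat.zero_mul l).symm).permCongr 1
  | m + 1 => (finCongr (by ring : m * l + l = (m + 1) * l)).permCongr (dsum (dpow lam m) lam)

/-- Direct sum of permutations, on `PermPat`. -/
def dsumP (p q : PermPat) : PermPat := ⟨p.1 + q.1, dsum p.2 q.2⟩

/-- The direct sum of a list of permutations. -/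
def dsumList : List PermPat → PermPat
  | [] => ⟨0, 1⟩
  | p :: L => dsumP p (dsumList L)

/-- The increasing permutation `ι_n = 12⋯n`. -/
def iota (n : ℕ) : PermPat := ⟨n, 1⟩

/-! ### Auxiliary lemmas for Statement 14 -/

lemma card_filter_le_pos {n : ℕ} (π : Equiv.Perm (Fin n)) (j : Fin n) :
    0 < (Finset.univ.filter fun m : Fin n => ¬ Linked π m ∧ m ≤ j).card := by
  apply Finset.card_pos.mpr
  refine ⟨⟨0, j.pos⟩, ?_⟩
  rw [Finset.mem_filter]
  exact ⟨Finset.mem_univ _, fun h => Nat.lt_irrefl 0 h.1,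
    Fin.mk_le_of_le_val (Nat.zero_le _)⟩

lemma blockIdx_lt_numBlocks {n : ℕ} (π : Equiv.Perm (Fin n)) (j : Fin n) :
    blockIdx π j < numBlocks π := by
  have h1 := card_filter_le_pos π j
  have h2 : (Finset.univ.filter fun m : Fin n => ¬ Linked π m ∧ m ≤ j).card ≤
      (Finset.univ.filter fun m : Fin n => ¬ Linked π m).card := by
    apply Finset.card_le_card
    intro x hx
    rw [Finset.mem_filter] at hx ⊢
    exact ⟨hx.1, hx.2.1⟩
  unfold blockIdx numBlocks
  omega

lemma blockF_nonempty {n : ℕ} (π : Equiv.Perm (Fin n)) (i : Fin (numBlocks π)) :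
    (blockF π i.val).Nonempty := by
  set U : Finset (Fin n) := Finset.univ.filter fun m : Fin n => ¬ Linked π m with hU
  have hcard : U.card = numBlocks π := rfl
  set e := U.orderIsoOfFin hcard with he
  refine ⟨(e i : Fin n), ?_⟩
  rw [blockF, Finset.mem_filter]
  refine ⟨Finset.mem_univ _, ?_⟩
  have hset : (Finset.univ.filter fun m : Fin n => ¬ Linked π m ∧ m ≤ (e i : Fin n)) =
      (Finset.univ.filter fun a : Fin (numBlocks π) => a ≤ i).image
        (fun a => (e a : Fin n)) := by
    ext m
    simp only [Finset.mem_filter, Finset.mem_univ, true_and, Finset.mem_image]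
    constructor
    · rintro ⟨hm, hle⟩
      have hmU : m ∈ U := by rw [hU, Finset.mem_filter]; exact ⟨Finset.mem_univ _, hm⟩
      refine ⟨e.symm ⟨m, hmU⟩, ?_, by simp⟩
      rw [← e.le_iff_le, OrderIso.apply_symm_apply]
      exact Subtype.coe_le_coe.mp (by simpa using hle)
    · rintro ⟨a, ha, rfl⟩
      constructor
      · exact (Finset.mem_filter.mp (e a).2).2
      · exact Subtype.coe_le_coe.mpr (e.le_iff_le.mpr ha)
  have hinj : Function.Injective (fun a : Fin (numBlocks π) => (e a : Fin n)) := by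
    intro a b hab
    exact e.injective (Subtype.coe_injective hab)
  have hcard2 : (Finset.univ.filter fun a : Fin (numBlocks π) => a ≤ i).card = i.val + 1 := by
    have : (Finset.univ.filter fun a : Fin (numBlocks π) => a ≤ i) = Finset.Iic i := by
      ext x; simp
    rw [this, Fin.card_Iic]
  rw [blockIdx, hset, Finset.card_image_of_injective _ hinj, hcard2]
  omega

lemma mem_blockF_self {n : ℕ} (π : Equiv.Perm (Fin n)) (j : Fin n) :
    j ∈ blockF π (blockIdx π j) := by
  rw [blockF, Finset.mem_filter]
  exact ⟨Finset.mem_univ _, rfl⟩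

lemma etaHat_eq_Phat_iff {n : ℕ} (π : Equiv.Perm (Fin n)) (E : Finset (Fin n))
    (i : Fin (numBlocks π)) :
    etaHat π E i = Phat π i ↔ blockF π i.val ⊆ E := by
  have hsub : (E.filter fun j => blockIdx π j = i.val) ⊆ blockF π i.val := by
    intro x hx
    rw [Finset.mem_filter] at hx
    rw [blockF, Finset.mem_filter]
    exact ⟨Finset.mem_univ _, hx.2⟩
  constructor
  · intro h
    have hcards : (E.filter fun j => blockIdx π j = i.val).card = (blockF π i.val).card := by
      have := congrArg Sigma.fst h
      simpa [etaHat, Phat, patternOf] using this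
    have heq : (E.filter fun j => blockIdx π j = i.val) = blockF π i.val :=
      Finset.eq_of_subset_of_card_le hsub (le_of_eq hcards.symm)
    rw [← heq]
    exact Finset.filter_subset _ _
  · intro h
    have heq : (E.filter fun j => blockIdx π j = i.val) = blockF π i.val := by
      apply Finset.Subset.antisymm hsub
      intro x hx
      have hx' := hx
      rw [blockF, Finset.mem_filter] at hx'
      exact Finset.mem_filter.mpr ⟨h hx, hx'.2⟩
    rw [etaHat, Phat, heq]

/-- For a nonempty set `S` of rightmost embeddings of `λ` in `π`, the
componentwise join `∨S` equals `π̂` — i.e. in every adjacency `i` some member of the chain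
`{η̂_i : η ∈ S}` attains `π̂_i` — if and only if `⋂_{η ∈ S} Z(η) = ∅`, i.e. every position
of `π` is nonzero in some member of `S`. -/
theorem join_eq_top_iff {k n : ℕ} (lam : Equiv.Perm (Fin k)) (π : Equiv.Perm (Fin n))
    (S : Finset (Finset (Fin n))) (hS : S.Nonempty)
    (hmem : ∀ E ∈ S, EhatMem ⟨k, lam⟩ π E) :
    (∀ i : Fin (numBlocks π), ∃ E ∈ S, etaHat π E i = Phat π i) ↔
      (∀ j : Fin n, ∃ E ∈ S, j ∈ E) := by
  constructor
  · intro h j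
    obtain ⟨E, hE, hEq⟩ := h ⟨blockIdx π j, blockIdx_lt_numBlocks π j⟩
    exact ⟨E, hE, (etaHat_eq_Phat_iff π E _).mp hEq (mem_blockF_self π j)⟩
  · intro h i
    have hne := blockF_nonempty π i
    set m := (blockF π i.val).min' hne with hmdef
    have hmmem : m ∈ blockF π i.val := Finset.min'_mem _ _
    obtain ⟨E, hE, hmE⟩ := h m
    refine ⟨E, hE, (etaHat_eq_Phat_iff π E i).mpr ?_⟩
    intro x hx
    have hrm := (hmem E hE).2
    have hbm : blockIdx π m = i.val := (Finset.mem_filter.mp hmmem).2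
    have hbx : blockIdx π x = i.val := (Finset.mem_filter.mp hx).2
    exact hrm m x (hbm.trans hbx.symm) (Finset.min'_le _ _ hx) hmE
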